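/- arXiv:2007.09086 — 6 statements merged into one kernel-verified Lean document; each statement's English description precedes it below -/
import Mathlib

section
/- For every k ≥ 3 and every m > 0 there exist unique natural numbers a, b, l such that m = A_a(k,b) + l, where a is maximal with A_a(k,0) ≤ m and b is maximal with A_a(k,b) ≤ m. -/
/-- The parametrized Ackermann function: `A a k b` is `A_a(k,b)`. -/
def A : ℕ → ℕ → ℕ → ℕ
  | 0, _, b => b + 1
  | a+1, k, 0 => (fun x => A a k x)^[k] 0
  | a+1, k, b+1 => (fun x => A a k x)^[k] (A (a+1) k b)
  termination_by a _ b => (a, b)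

/-- `m = A_a(k,b) + l` is the `k`-normal form of `m`: `a` is maximal with
`A_a(k,0) ≤ m` and `b` is maximal with `A_a(k,b) ≤ m`. -/
def IsNF (k m a b l : ℕ) : Prop :=
  m = A a k b + l ∧ A a k 0 ≤ m ∧
  (∀ a', A a' k 0 ≤ m → a' ≤ a) ∧
  (∀ b', A a k b' ≤ m → b' ≤ b)

/-- The graph of the hereditary base change operation `m ↦ m[k←k+1]`. -/
inductive BC (k : ℕ) : ℕ → ℕ → Prop
  | zero : BC k 0 0
  | step {a b l a' b'} :
      IsNF k (A a k b + l) a b l → BC k a a' → BC k b b' →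
      BC k (A a k b + l) (A a' (k+1) b' + l)

/-! Both maximisations in a normal form range over sets bounded by `m`, because `A_a(k,b)`
exceeds `b` (for `k ≥ 1`) and `A_a(k,0)` exceeds `a` (for `k ≥ 2`). Greatest elements of
nonempty bounded sets of naturals exist and are unique, which pins down `a`, then `b`, and
then `l = m - A_a(k,b)`. -/

theorem Function.lt_iterate_succ_apply {α : Type*} [Preorder α] {f : α → α}
    (hf : ∀ x, x < f x) (n : ℕ) (x : α) : x < f^[n + 1] x :=
  (hf x).trans_le (Function.id_le_iterate_of_id_le (fun y => (hf y).le) n (f x))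

theorem exists_isGreatest_of_lt_self {f : ℕ → ℕ} {m n : ℕ} (hf : ∀ x, x < f x) (hn : f n ≤ m) :
    ∃ x, IsGreatest {x | f x ≤ m} x :=
  BddAbove.exists_isGreatest_of_nonempty ⟨m, fun x hx => ((hf x).trans_le hx).le⟩ ⟨n, hn⟩

theorem lt_A {k : ℕ} (hk : 0 < k) (a b : ℕ) : b < A a k b := by
  obtain ⟨k, rfl⟩ := Nat.exists_eq_succ_of_ne_zero hk.ne'
  induction a generalizing b with
  | zero => simp [A]
  | succ a iha =>
    induction b with
    | zero =>
      rw [A]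
      exact Function.lt_iterate_succ_apply iha _ 0
    | succ b ihb =>
      rw [A]
      exact (Nat.succ_le_of_lt ihb).trans_lt (Function.lt_iterate_succ_apply iha _ _)

theorem lt_A_zero {k : ℕ} (hk : 2 ≤ k) (a : ℕ) : a < A a k 0 := by
  obtain ⟨k, rfl⟩ := Nat.exists_eq_add_of_le' hk
  induction a with
  | zero => simp [A]
  | succ a ih =>
    rw [A, Function.iterate_succ_apply]
    exact (Nat.succ_le_of_lt ih).trans_lt (Function.lt_iterate_succ_apply (lt_A (by omega) a) _ _)

theorem isNF_iff {k m a b l : ℕ} :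
    IsNF k m a b l ↔
      IsGreatest {a' | A a' k 0 ≤ m} a ∧ IsGreatest {b' | A a k b' ≤ m} b ∧ m = A a k b + l := by
  constructor
  · rintro ⟨hm, ha, hamax, hbmax⟩
    exact ⟨⟨ha, hamax⟩, ⟨hm ▸ Nat.le_add_right _ _, hbmax⟩, hm⟩
  · rintro ⟨⟨ha, hamax⟩, ⟨-, hbmax⟩, hm⟩
    exact ⟨hm, ha, hamax, hbmax⟩

/-- Every `m > 0` has a unique `k`-normal form `m = A_a(k,b) + l` with `a`
maximal such that `A_a(k,0) ≤ m` and `b` maximal such that `A_a(k,b) ≤ m`. -/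
theorem normal_form_exists_unique (k m : ℕ) (hk : 3 ≤ k) (hm : 0 < m) :
    ∃! p : ℕ × ℕ × ℕ, IsNF k m p.1 p.2.1 p.2.2 := by
  have hA0 : A 0 k 0 ≤ m := by rw [A]; exact hm
  obtain ⟨a, ha⟩ := exists_isGreatest_of_lt_self (lt_A_zero (by omega)) hA0
  obtain ⟨b, hb⟩ := exists_isGreatest_of_lt_self (lt_A (by omega) a) ha.1
  refine ⟨(a, b, m - A a k b), isNF_iff.2 ⟨ha, hb, (Nat.add_sub_of_le hb.1).symm⟩, ?_⟩
  rintro ⟨a', b', l'⟩ h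
  obtain ⟨ha', hb', rfl⟩ := isNF_iff.1 h
  obtain rfl := ha'.unique ha
  obtain rfl := hb'.unique hb
  simp
end

section
/- If k ≥ 3 and m has k-normal form A_a(k,b) + l with l > 0, then A_a(k,b) + (l-1) is also a k-normal form, i.e. a is still maximal with A_a(k,0) ≤ m-1 and b is maximal with A_a(k,b) ≤ m-1. -/
lemma iter_le (f : ℕ → ℕ) (h : ∀ x, x ≤ f x) : ∀ n x, x ≤ f^[n] x := by
  intro n
  induction n with
  | zero => intro x; simp
  | succ n ih =>
    intro x
    rw [Function.iterate_succ_apply]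
    exact (h x).trans (ih (f x))

lemma iter_lt (f : ℕ → ℕ) (h : ∀ x, x < f x) (k : ℕ) (hk : 1 ≤ k) (x : ℕ) :
    x < f^[k] x := by
  obtain ⟨k', rfl⟩ := Nat.exists_eq_add_of_le hk
  rw [Nat.add_comm, Function.iterate_add_apply]
  exact (h x).trans_le (iter_le f (fun y => (h y).le) k' (f x))

lemma A_self_lt (a k : ℕ) (hk : 1 ≤ k) : ∀ b, b < A a k b := by
  induction a with
  | zero => intro b; simp [A]
  | succ a ih =>
    intro b
    induction b with
    | zero =>
      show 0 < A (a+1) k 0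
      rw [show A (a+1) k 0 = (fun x => A a k x)^[k] 0 from by rw [A]]
      exact iter_lt _ ih k hk 0
    | succ b ihb =>
      show b + 1 < A (a+1) k (b+1)
      rw [show A (a+1) k (b+1) = (fun x => A a k x)^[k] (A (a+1) k b) from by rw [A]]
      exact Nat.lt_of_le_of_lt ihb (iter_lt _ ih k hk _)

lemma A_zero_le (a k b : ℕ) (hk : 1 ≤ k) : A a k 0 ≤ A a k b := by
  induction b with
  | zero => exact le_refl _
  | succ b ih =>
    refine ih.trans ?_
    match a with
    | 0 => simp [A]
    | a+1 =>
      rw [show A (a+1) k (b+1) = (fun x => A a k x)^[k] (A (a+1) k b) from by rw [A]]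
      exact iter_le _ (fun x => (A_self_lt a k hk x).le) k _

/-- If `m = A_a(k,b) + l` is in `k`-normal form with `l > 0`, then
`A_a(k,b) + (l-1)` is the `k`-normal form of `m - 1`. -/
theorem normal_form_pred (k m a b l : ℕ) (hk : 3 ≤ k)
    (h : IsNF k m a b l) (hl : 0 < l) : IsNF k (m - 1) a b (l - 1) := by
  obtain ⟨hm, h0, ha, hb⟩ := h
  have hz := A_zero_le a k b (by omega)
  refine ⟨by omega, by omega, fun a' h' => ha a' (h'.trans (Nat.sub_le m 1)),
    fun b' h' => hb b' (h'.trans (Nat.sub_le m 1))⟩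
end

section
/- For every k ≥ 3 and every m ≥ k, m < m[k←k+1]. -/
lemma iter_add (f : ℕ → ℕ) (hf : ∀ x, x < f x) : ∀ n x, x + n ≤ f^[n] x := by
  intro n
  induction n with
  | zero => simp
  | succ n ih =>
    intro x
    rw [Function.iterate_succ_apply]
    calc x + (n+1) = (x+1) + n := by ring
    _ ≤ f x + n := by have := hf x; omega
    _ ≤ f^[n] (f x) := ih _

lemma iter_le_iter (f g : ℕ → ℕ) (hfg : ∀ x, f x ≤ g x) (hg : Monotone g) :
    ∀ n x, f^[n] x ≤ g^[n] x := by
  intro n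
  induction n with
  | zero => simp
  | succ n ih =>
    intro x
    rw [Function.iterate_succ_apply', Function.iterate_succ_apply']
    exact le_trans (hfg _) (hg (ih x))

lemma A_gt {k : ℕ} (hk : 1 ≤ k) : ∀ a b, b < A a k b := by
  intro a
  induction a with
  | zero => intro b; simp [A]
  | succ a iha =>
    intro b
    induction b with
    | zero =>
      have := iter_add (fun x => A a k x) (iha) k 0
      rw [A]; omega
    | succ b ihb =>
      have := iter_add (fun x => A a k x) (iha) k (A (a+1) k b)
      rw [A]; omega

lemma A_strictMono {k : ℕ} (hk : 1 ≤ k) (a : ℕ) : StrictMono (A a k) := by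
  apply strictMono_nat_of_lt_succ
  intro b
  cases a with
  | zero => simp [A]
  | succ a =>
    have := iter_add (fun x => A a k x) (A_gt hk a) k (A (a+1) k b)
    rw [show A (a+1) k (b+1) = (fun x => A a k x)^[k] (A (a+1) k b) from by rw [A]]
    omega

lemma A_mono {k : ℕ} (hk : 1 ≤ k) (a : ℕ) : Monotone (A a k) :=
  (A_strictMono hk a).monotone

lemma A_le_succ_a {k : ℕ} (hk : 1 ≤ k) (a : ℕ) : ∀ b, A a k b ≤ A (a+1) k b := by
  obtain ⟨j, rfl⟩ : ∃ j, k = j + 1 := ⟨k - 1, by omega⟩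
  intro b
  induction b with
  | zero =>
    rw [show A (a+1) (j+1) 0 = (fun x => A a (j+1) x)^[j+1] 0 from by rw [A],
      Function.iterate_succ_apply]
    have := iter_add (fun x => A a (j+1) x) (A_gt hk a) j (A a (j+1) 0)
    omega
  | succ b ihb =>
    rw [show A (a+1) (j+1) (b+1) = (fun x => A a (j+1) x)^[j+1] (A (a+1) (j+1) b)
        from by rw [A], Function.iterate_succ_apply]
    have h1 : b + 1 ≤ A (a+1) (j+1) b := A_gt hk (a+1) b
    have h2 : A a (j+1) (b+1) ≤ A a (j+1) (A (a+1) (j+1) b) := A_mono hk a h1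
    have := iter_add (fun x => A a (j+1) x) (A_gt hk a) j (A a (j+1) (A (a+1) (j+1) b))
    omega

lemma A_mono_a {k a a' : ℕ} (hk : 1 ≤ k) (h : a ≤ a') (b : ℕ) : A a k b ≤ A a' k b := by
  have : Monotone (fun a => A a k b) := monotone_nat_of_le_succ (fun a => A_le_succ_a hk a b)
  exact this h

lemma A_le_succ_k {k : ℕ} (hk : 1 ≤ k) : ∀ a b, A a k b ≤ A a (k+1) b := by
  intro a
  induction a with
  | zero => intro b; simp [A]
  | succ a iha =>
    have hiter : ∀ n x, (fun x => A a k x)^[n] x ≤ (fun x => A a (k+1) x)^[n] x :=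
      iter_le_iter _ _ iha (A_mono (by omega) a)
    have hgmono : ∀ n, Monotone ((fun x => A a (k+1) x)^[n]) :=
      fun n => (A_mono (by omega) a).iterate n
    intro b
    induction b with
    | zero =>
      rw [show A (a+1) k 0 = (fun x => A a k x)^[k] 0 from by rw [A],
        show A (a+1) (k+1) 0 = (fun x => A a (k+1) x)^[k+1] 0 from by rw [A],
        Function.iterate_succ_apply]
      calc (fun x => A a k x)^[k] 0 ≤ (fun x => A a (k+1) x)^[k] 0 := hiter k 0
      _ ≤ (fun x => A a (k+1) x)^[k] (A a (k+1) 0) := hgmono k (Nat.zero_le _)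
    | succ b ihb =>
      rw [show A (a+1) k (b+1) = (fun x => A a k x)^[k] (A (a+1) k b) from by rw [A],
        show A (a+1) (k+1) (b+1) = (fun x => A a (k+1) x)^[k+1] (A (a+1) (k+1) b)
          from by rw [A], Function.iterate_succ_apply]
      calc (fun x => A a k x)^[k] (A (a+1) k b)
          ≤ (fun x => A a (k+1) x)^[k] (A (a+1) k b) := hiter k _
      _ ≤ (fun x => A a (k+1) x)^[k] (A (a+1) (k+1) b) := hgmono k ihb
      _ ≤ (fun x => A a (k+1) x)^[k] (A a (k+1) (A (a+1) (k+1) b)) :=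
          hgmono k (le_of_lt (A_gt (by omega) a _))

lemma A_lt_succ_k {k a : ℕ} (hk : 1 ≤ k) : ∀ b, A (a+1) k b < A (a+1) (k+1) b := by
  have hiter : ∀ n x, (fun x => A a k x)^[n] x ≤ (fun x => A a (k+1) x)^[n] x :=
    iter_le_iter _ _ (A_le_succ_k hk a) (A_mono (by omega) a)
  have hgmono : ∀ n, Monotone ((fun x => A a (k+1) x)^[n]) :=
    fun n => (A_mono (by omega) a).iterate n
  have hfstrict : ∀ n, StrictMono ((fun x => A a k x)^[n]) :=
    fun n => (A_strictMono hk a).iterate n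
  intro b
  induction b with
  | zero =>
    rw [show A (a+1) k 0 = (fun x => A a k x)^[k] 0 from by rw [A],
      show A (a+1) (k+1) 0 = (fun x => A a (k+1) x)^[k+1] 0 from by rw [A],
      Function.iterate_succ_apply']
    calc (fun x => A a k x)^[k] 0 ≤ (fun x => A a (k+1) x)^[k] 0 := hiter k 0
    _ < A a (k+1) ((fun x => A a (k+1) x)^[k] 0) := A_gt (by omega) a _
  | succ b ihb =>
    rw [show A (a+1) k (b+1) = (fun x => A a k x)^[k] (A (a+1) k b) from by rw [A],
      show A (a+1) (k+1) (b+1) = (fun x => A a (k+1) x)^[k+1] (A (a+1) (k+1) b)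
        from by rw [A], Function.iterate_succ_apply]
    calc (fun x => A a k x)^[k] (A (a+1) k b)
        < (fun x => A a k x)^[k] (A (a+1) (k+1) b) := hfstrict k ihb
    _ ≤ (fun x => A a (k+1) x)^[k] (A (a+1) (k+1) b) := hiter k _
    _ ≤ (fun x => A a (k+1) x)^[k] (A a (k+1) (A (a+1) (k+1) b)) :=
        hgmono k (le_of_lt (A_gt (by omega) a _))

lemma A_one_zero (k : ℕ) : A 1 k 0 = k := by
  have : ∀ n x, (fun x => A 0 k x)^[n] x = x + n := by
    intro n
    induction n with
    | zero => simp
    | succ n ih =>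
      intro x
      rw [Function.iterate_succ_apply, ih]
      simp [A]; omega
  rw [A, this]; omega

lemma BC_le {k m m' : ℕ} (hk : 1 ≤ k) (h : BC k m m') : m ≤ m' := by
  induction h with
  | zero => exact le_refl 0
  | step hnf ha hb iha ihb =>
    rename_i a b l a' b'
    have h1 : A a k b ≤ A a (k+1) b := A_le_succ_k hk a b
    have h2 : A a (k+1) b ≤ A a (k+1) b' := A_mono (by omega) a ihb
    have h3 : A a (k+1) b' ≤ A a' (k+1) b' := A_mono_a (by omega) iha b'
    omega

/-- For every `k ≥ 3` and `m ≥ k`, `m < m[k←k+1]`. -/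
theorem base_change_lt (k m m' : ℕ) (hk : 3 ≤ k) (h : BC k m m') (hm : k ≤ m) :
    m < m' := by
  cases h with
  | zero => omega
  | step hnf ha hb =>
    rename_i a b l a' b'
    have hk1 : 1 ≤ k := by omega
    have ha1 : 1 ≤ a := hnf.2.2.1 1 (by rw [A_one_zero]; exact hm)
    obtain ⟨a₀, rfl⟩ : ∃ a₀, a = a₀ + 1 := ⟨a - 1, by omega⟩
    have h1 : A (a₀+1) k b < A (a₀+1) (k+1) b := A_lt_succ_k hk1 b
    have h2 : A (a₀+1) (k+1) b ≤ A (a₀+1) (k+1) b' :=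
      A_mono (by omega) _ (BC_le hk1 hb)
    have h3 : A (a₀+1) (k+1) b' ≤ A a' (k+1) b' :=
      A_mono_a (by omega) (BC_le hk1 ha) b'
    omega
end

section
/- For every k ≥ 3 and every m > 0, (m-1)[k←k+1] < m[k←k+1], i.e. the hereditary base change operation is strictly monotone. -/
theorem add_le_iterate_apply {f : ℕ → ℕ} (hf : ∀ x, x < f x) (n x : ℕ) :
    x + n ≤ f^[n] x := by
  induction n with
  | zero => simp
  | succ n ih => rw [Function.iterate_succ_apply']; have := hf (f^[n] x); omega

theorem exists_le_lt_succ_of_lt {α : Type*} [LinearOrder α] {s : ℕ → α} {b : α} (h₀ : s 0 ≤ b)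
    {K : ℕ} (hK : b < s K) : ∃ j < K, s j ≤ b ∧ b < s (j + 1) := by
  induction K with
  | zero => exact absurd hK (not_lt.2 h₀)
  | succ K ih =>
    by_cases hb : b < s K
    · obtain ⟨j, hj, hjb⟩ := ih hb
      exact ⟨j, by omega, hjb⟩
    · exact ⟨K, K.lt_succ_self, not_lt.1 hb, hK⟩

theorem StrictMono.apply_add_le_apply_add {f : ℕ → ℕ} (hf : StrictMono f) {u v : ℕ}
    (h : u ≤ v) : f u + v ≤ f v + u := by
  obtain ⟨d, rfl⟩ := Nat.exists_eq_add_of_le h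
  have := hf.add_le_nat d u
  rw [add_comm d u] at this
  omega

theorem Monotone.iterate_le_iterate_succ {f g : ℕ → ℕ} (hf : Monotone f) (hfg : f ≤ g)
    (hg : id ≤ g) (n x : ℕ) : f^[n] x ≤ g^[n + 1] x := by
  rw [Function.iterate_succ_apply']
  exact (hf.iterate_le_of_le hfg n x).trans (hg _)

section Ackermann

variable {k : ℕ}

@[simp] theorem A_zero_left (k b : ℕ) : A 0 k b = b + 1 := by rw [A]

theorem A_succ_zero (a k : ℕ) : A (a + 1) k 0 = (A a k)^[k] 0 := by rw [A]

theorem A_succ_succ (a k b : ℕ) : A (a + 1) k (b + 1) = (A a k)^[k] (A (a + 1) k b) := by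
  rw [A]

theorem lt_A_right (hk : 1 ≤ k) (a b : ℕ) : b < A a k b := by
  induction a generalizing b with
  | zero => simp
  | succ a ih =>
    have := add_le_iterate_apply ih k
    induction b with
    | zero => rw [A_succ_zero]; have := this 0; omega
    | succ b ihb => rw [A_succ_succ]; have := this (A (a + 1) k b); omega

theorem A_pos (hk : 1 ≤ k) (a b : ℕ) : 0 < A a k b :=
  Nat.zero_lt_of_lt (lt_A_right hk a b)

theorem A_strictMono_right (hk : 1 ≤ k) (a : ℕ) : StrictMono (A a k) := by
  refine strictMono_nat_of_lt_succ fun b => ?_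
  cases a with
  | zero => simp
  | succ a =>
    rw [A_succ_succ]
    have := add_le_iterate_apply (lt_A_right hk a) k (A (a + 1) k b)
    omega

theorem A_lt_A_succ_left (hk : 2 ≤ k) (a b : ℕ) : A a k b < A (a + 1) k b := by
  obtain ⟨j, rfl⟩ : ∃ j, k = j + 1 := ⟨k - 1, by omega⟩
  have hT := A_strictMono_right (k := j + 1) (by omega) a
  have hiter := add_le_iterate_apply (lt_A_right (k := j + 1) (by omega) a) j
  cases b with
  | zero =>
    rw [A_succ_zero, Function.iterate_succ_apply]
    have := hiter (A a (j + 1) 0)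
    omega
  | succ b =>
    rw [A_succ_succ, Function.iterate_succ_apply]
    have := hT.monotone (show b + 1 ≤ _ from lt_A_right (k := j + 1) (by omega) (a + 1) b)
    have := hiter (A a (j + 1) (A (a + 1) (j + 1) b))
    omega

theorem A_strictMono_left (hk : 2 ≤ k) (b : ℕ) : StrictMono fun a => A a k b :=
  strictMono_nat_of_lt_succ fun a => A_lt_A_succ_left hk a b

theorem lt_A_left (hk : 2 ≤ k) (a b : ℕ) : a < A a k b := by
  have := (A_strictMono_left hk b).add_le_nat a 0
  simp only [A_zero_left, add_zero] at this
  omega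

theorem A_le_A_succ_base (hk : 1 ≤ k) (a b : ℕ) : A a k b ≤ A a (k + 1) b := by
  induction a generalizing b with
  | zero => simp
  | succ a ih =>
    have hiter := (A_strictMono_right hk a).monotone.iterate_le_iterate_succ ih
      (fun x => (lt_A_right (k := k + 1) (by omega) a x).le) k
    induction b with
    | zero => simpa only [A_succ_zero] using hiter 0
    | succ b ihb =>
      rw [A_succ_succ, A_succ_succ]
      exact (hiter _).trans (((A_strictMono_right (by omega) a).monotone.iterate _) ihb)

theorem A_gap_mono_right (hk : 1 ≤ k) (a : ℕ) {x y : ℕ} (h : x ≤ y) :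
    A a k (x + 1) + A a k y ≤ A a k (y + 1) + A a k x := by
  cases a with
  | zero => simp only [A_zero_left]; omega
  | succ a =>
    rw [A_succ_succ, A_succ_succ]
    exact ((A_strictMono_right hk a).iterate k).apply_add_le_apply_add
      ((A_strictMono_right hk (a + 1)).monotone h)

theorem A_gap_le_succ_left (hk : 1 ≤ k) (a b : ℕ) :
    A a k (b + 1) + A (a + 1) k b ≤ A (a + 1) k (b + 1) + A a k b := by
  obtain ⟨j, rfl⟩ : ∃ j, k = j + 1 := ⟨k - 1, by omega⟩
  set X := A (a + 1) (j + 1) b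
  have hX : b + 1 ≤ X := lt_A_right hk (a + 1) b
  have hTX : A a (j + 1) X ≤ A (a + 1) (j + 1) (b + 1) := by
    rw [A_succ_succ, Function.iterate_succ_apply]
    exact Function.id_le_iterate_of_id_le (fun x => (lt_A_right hk a x).le) j _
  have := (A_strictMono_right hk a).apply_add_le_apply_add hX
  have := lt_A_right hk a b
  omega

theorem A_gap_mono_left (hk : 1 ≤ k) {a c : ℕ} (h : a ≤ c) (b : ℕ) :
    A a k (b + 1) + A c k b ≤ A c k (b + 1) + A a k b := by
  induction c, h using Nat.le_induction with
  | base => omega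
  | succ c _ ih => have := A_gap_le_succ_left hk c b; omega

theorem A_gap_le_succ_base (hk : 1 ≤ k) (a b : ℕ) :
    A a k (b + 1) + A a (k + 1) b ≤ A a (k + 1) (b + 1) + A a k b := by
  cases a with
  | zero => simp only [A_zero_left]; omega
  | succ a =>
    have hiter := (A_strictMono_right hk a).monotone.iterate_le_iterate_succ
      (A_le_A_succ_base hk a) (fun x => (lt_A_right (k := k + 1) (by omega) a x).le) k
      (A (a + 1) k b)
    have := ((A_strictMono_right (k := k + 1) (by omega) a).iterate (k + 1)).apply_add_le_apply_add
      (A_le_A_succ_base hk (a + 1) b)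
    rw [A_succ_succ a k b, A_succ_succ a (k + 1) b]
    omega

theorem A_gap_le_gap (hk : 1 ≤ k) {a c x y : ℕ} (hac : a ≤ c) (hxy : x ≤ y) :
    A a k (x + 1) + A c (k + 1) y ≤ A c (k + 1) (y + 1) + A a k x := by
  have := A_gap_mono_right hk a hxy
  have := A_gap_mono_left hk hac y
  have := A_gap_le_succ_base hk c y
  omega

end Ackermann

section BaseChange

variable {k : ℕ}

theorem IsNF.unique {m a b l a₂ b₂ l₂ : ℕ} (h : IsNF k m a b l) (h₂ : IsNF k m a₂ b₂ l₂) :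
    a = a₂ ∧ b = b₂ ∧ l = l₂ := by
  obtain ⟨hm, ha, hamax, hbmax⟩ := h
  obtain ⟨hm₂, ha₂, hamax₂, hbmax₂⟩ := h₂
  obtain rfl : a = a₂ := le_antisymm (hamax₂ a ha) (hamax a₂ ha₂)
  obtain rfl : b = b₂ := le_antisymm (hbmax₂ b (by omega)) (hbmax b₂ (by omega))
  exact ⟨rfl, rfl, by omega⟩

theorem IsNF.lt_A_succ_left {m a b l : ℕ} (h : IsNF k m a b l) : m < A (a + 1) k 0 :=
  lt_of_not_ge fun h' => by have := h.2.2.1 _ h'; omega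

theorem IsNF.lt_A_succ_right {m a b l : ℕ} (h : IsNF k m a b l) : m < A a k (b + 1) :=
  lt_of_not_ge fun h' => by have := h.2.2.2 _ h'; omega

theorem isNF_A (hk : 2 ≤ k) {a c : ℕ} (h : A a k c < A (a + 1) k 0) :
    IsNF k (A a k c) a c 0 := by
  refine ⟨rfl, (A_strictMono_right (by omega) a).monotone c.zero_le, fun a' ha' => ?_,
    fun b' hb' => (A_strictMono_right (by omega) a).le_iff_le.1 hb'⟩
  by_contra! ha
  have := (A_strictMono_left hk 0).monotone (show a + 1 ≤ a' from ha)
  omega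

theorem BC.eq_zero (hk : 1 ≤ k) {m q : ℕ} (hq : BC k m q) (hm : m = 0) : q = 0 := by
  cases hq with
  | zero => rfl
  | @step a b _ _ _ _ _ _ => have := A_pos hk a b; omega

theorem BC.exists_eq_of_isNF (hk : 1 ≤ k) {m q a b l : ℕ} (hq : BC k m q)
    (hNF : IsNF k m a b l) : ∃ a' b', BC k a a' ∧ BC k b b' ∧ q = A a' (k + 1) b' + l := by
  cases hq with
  | zero => have := A_pos hk a b; have := hNF.1; omega
  | step hNF₂ ha hb =>
    obtain ⟨rfl, rfl, rfl⟩ := hNF₂.unique hNF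
    exact ⟨_, _, ha, hb, rfl⟩

theorem BC.unique (hk : 1 ≤ k) {m p q : ℕ} (hp : BC k m p) (hq : BC k m q) : p = q := by
  induction hp generalizing q with
  | zero => exact (hq.eq_zero hk rfl).symm
  | step hNF _ _ iha ihb =>
    obtain ⟨a', b', ha', hb', rfl⟩ := hq.exists_eq_of_isNF hk hNF
    rw [iha ha', ihb hb']

theorem BC.le (hk : 1 ≤ k) {m p : ℕ} (h : BC k m p) : m ≤ p := by
  induction h with
  | zero => rfl
  | @step a b l a' b' _ _ _ iha ihb =>
    calc A a k b + l ≤ A a (k + 1) b + l := by gcongr; exact A_le_A_succ_base hk a b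
      _ ≤ A a' (k + 1) b + l := by gcongr; exact (A_strictMono_left (by omega) b).monotone iha
      _ ≤ A a' (k + 1) b' + l := by gcongr; exact (A_strictMono_right (by omega) a').monotone ihb

theorem BC.iterate (hk : 2 ≤ k) {a a' : ℕ} (ha : BC k a a') {j : ℕ}
    (hj : (A a k)^[j] 0 < A (a + 1) k 0) : BC k ((A a k)^[j] 0) ((A a' (k + 1))^[j] 0) := by
  induction j with
  | zero => exact BC.zero
  | succ j ih =>
    rw [Function.iterate_succ_apply'] at hj ⊢
    rw [Function.iterate_succ_apply']
    exact BC.step (l := 0) (isNF_A hk hj) ha (ih ((lt_A_right (by omega) a _).trans hj))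

theorem BC.add_lt_A_succ_right (hk : 1 ≤ k) {n a b l a' b' : ℕ} (hNF : IsNF k n a b l)
    (ha : BC k a a') (hb : BC k b b') : A a' (k + 1) b' + l < A a' (k + 1) (b' + 1) := by
  have := hNF.lt_A_succ_right
  have := A_gap_le_gap hk (ha.le hk) (hb.le hk)
  have := hNF.1
  omega

theorem BC.add_lt_A_succ_left (hk : 2 ≤ k) {n a b l a' b' : ℕ}
    (hmono : ∀ c ≤ n, ∀ d < c, ∀ p q, BC k d p → BC k c q → p < q) (hNF : IsNF k n a b l)
    (ha : BC k a a') (hb : BC k b b') : A a' (k + 1) b' + l < A (a' + 1) (k + 1) 0 := by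
  have hn := hNF.lt_A_succ_left
  have hbn : A a k b ≤ n := by rw [hNF.1]; omega
  have hbK : b < (A a k)^[k] 0 := by
    rw [← A_succ_zero]; exact (lt_A_right (by omega) a b).trans_le hbn |>.trans hn
  obtain ⟨j, hjk, hjb, hbj⟩ := exists_le_lt_succ_of_lt (s := fun j => (A a k)^[j] 0) b.zero_le hbK
  have hc : (A a k)^[j + 1] 0 ≤ A a k b := by
    rw [Function.iterate_succ_apply']
    exact (A_strictMono_right (by omega) a).monotone hjb
  have hb' : b' < (A a' (k + 1))^[j + 1] 0 :=
    hmono _ (hc.trans hbn) b hbj _ _ hb (ha.iterate hk (by omega))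
  have hT' := (A_strictMono_right (k := k + 1) (by omega) a').monotone
  have hb'k : b' < (A a' (k + 1))^[k] 0 :=
    hb'.trans_le (hT'.monotone_iterate_of_le_map (Nat.zero_le _) (show j + 1 ≤ k by omega))
  calc A a' (k + 1) b' + l < A a' (k + 1) (b' + 1) :=
      BC.add_lt_A_succ_right (by omega) hNF ha hb
    _ ≤ A a' (k + 1) ((A a' (k + 1))^[k] 0) := hT' hb'k
    _ = A (a' + 1) (k + 1) 0 := by rw [A_succ_zero, Function.iterate_succ_apply']

theorem BC.lt_of_lt (hk : 2 ≤ k) {m n p q : ℕ} (hmn : m < n) (hp : BC k m p) (hq : BC k n q) :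
    p < q := by
  induction n using Nat.strong_induction_on generalizing m p q with
  | _ n IH =>
  have hk1 : 1 ≤ k := by omega
  cases hp with
  | zero =>
    cases hq with
    | zero => omega
    | @step _ _ _ c' d' => have := A_pos (k := k + 1) (by omega) c' d'; omega
  | @step a b l a' b' hNF ha hb =>
    cases hq with
    | zero => omega
    | @step c d l₂ c' d' hNF₂ hc hd =>
      obtain ⟨-, -, hcmax, hdmax⟩ := hNF₂
      have hright := BC.add_lt_A_succ_right hk1 hNF ha hb
      have hleft := BC.add_lt_A_succ_left hk (fun e he f hf _ _ => IH e (by omega) hf) hNF ha hb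
      obtain rfl | hac := (hcmax a (by have := hNF.2.1; omega)).eq_or_lt
      · obtain rfl := ha.unique hk1 hc
        obtain rfl | hbd := (hdmax b (by omega)).eq_or_lt
        · obtain rfl := hb.unique hk1 hd
          omega
        · have hbd' : b' + 1 ≤ d' := IH d (by have := lt_A_right hk1 a d; omega) hbd hb hd
          calc A a' (k + 1) b' + l < A a' (k + 1) (b' + 1) := hright
            _ ≤ A a' (k + 1) d' := (A_strictMono_right (by omega) a').monotone hbd'
            _ ≤ A a' (k + 1) d' + l₂ := Nat.le_add_right _ _
      · have hac' : a' + 1 ≤ c' := IH c (by have := lt_A_left hk c d; omega) hac ha hc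
        calc A a' (k + 1) b' + l < A (a' + 1) (k + 1) 0 := hleft
          _ ≤ A c' (k + 1) 0 := (A_strictMono_left (by omega) 0).monotone hac'
          _ ≤ A c' (k + 1) d' := (A_strictMono_right (by omega) c').monotone d'.zero_le
          _ ≤ A c' (k + 1) d' + l₂ := Nat.le_add_right _ _

/-- Strict monotonicity of the base change: for `m > 0`,
`(m-1)[k←k+1] < m[k←k+1]`. -/
theorem base_change_strict_mono (k m p q : ℕ) (hk : 3 ≤ k) (hm : 0 < m)
    (hp : BC k (m - 1) p) (hq : BC k m q) : p < q :=
  hp.lt_of_lt (by omega) (by omega) hq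
end BaseChange
end

section
/- The standard fundamental sequences on ordinals below ε₀ satisfy the Bachmann property: if α[x] < β < α, then α[x] ≤ β[1]. -/
/-!
Induction on the Cantor normal form of `α`. If `α = ω^e·n + a` with `a ≠ 0`, or `α = ω^e·n` with
`n ≥ 2`, then `α` and `α[x]` share the prefix `ω^e·p` (with `p = n`, resp. `n - 1`); every `β`
strictly between them has the same prefix, which `β[1]` keeps, so the claim reduces to the tail
`a`, resp. `ω^e`.

For `α = ω^e` the leading exponent `e'` of `β` satisfies `e[x] ≤ e' < e`. When `e = c + 1`,
`α[x] = ω^c·x` and `e' = c`; since `β > ω^c·x` and passing to `β[1]` loses at most one copy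
of `ω^c`, `β[1] ≥ ω^c·x`. When `e` is a limit, `α[x] = ω^{e[x]}`: if `β > ω^{e'}` then already
`β[1] ≥ ω^{e'}`, and if `β = ω^{e'}` then `β[1] = ω^{e'[1]}`, where the induction hypothesis
for `e` gives `e[x] ≤ e'[1]`.
-/

/-- The predecessor of an ordinal notation: `some β` with `β + 1 = α` if `α` is
a successor, `none` otherwise. -/
def predO : ONote → Option ONote
  | .zero => none
  | .oadd .zero n .zero =>
      some (if h : (n : ℕ) = 1 then .zero
            else .oadd .zero ⟨(n : ℕ) - 1, by have h3 : 0 < (n : ℕ) := n.2; omega⟩ .zero)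
  | .oadd _ _ .zero => none
  | .oadd e n a => (predO a).map (.oadd e n)

/-- The standard fundamental sequences for ordinals below `ε₀` (in Cantor normal
form): `0[x] = 0`, `(β+1)[x] = β`, `(δ + ω^{γ+1})[x] = δ + ω^γ·x` and
`(δ + ω^λ)[x] = δ + ω^{λ[x]}` for limits `λ`. -/
def fundSeq : ONote → ℕ → ONote
  | .zero, _ => .zero
  | .oadd e n (.oadd e' n' a'), x => .oadd e n (fundSeq (.oadd e' n' a') x)
  | .oadd .zero n .zero, _ =>
      if h : (n : ℕ) = 1 then .zero
      else .oadd .zero ⟨(n : ℕ) - 1, by have h3 : 0 < (n : ℕ) := n.2; omega⟩ .zero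
  | .oadd (.oadd f m b) n .zero, x =>
      let tail : ONote :=
        match predO (.oadd f m b) with
        | some e' =>
            if h : x = 0 then .zero
            else .oadd e' ⟨x, Nat.pos_of_ne_zero h⟩ .zero
        | none => .oadd (fundSeq (.oadd f m b) x) 1 .zero
      if h : (n : ℕ) = 1 then tail
      else .oadd (.oadd f m b) ⟨(n : ℕ) - 1, by have h3 : 0 < (n : ℕ) := n.2; omega⟩ tail

open Ordinal ONote

theorem ONote.NF.log_repr {e a : ONote} {n : ℕ+} (h : NF (ONote.oadd e n a)) :
    log ω (ONote.oadd e n a).repr = e.repr :=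
  (log_eq_iff one_lt_omega0 (lt_def.1 (oadd_pos e n a)).ne' _).2
    ⟨omega0_le_oadd e n a, (NF.below_of_lt (lt_add_one _) h).repr_lt⟩

theorem ONote.NF.repr_div_opow {e a : ONote} {n : ℕ+} (h : NF (ONote.oadd e n a)) :
    (ONote.oadd e n a).repr / ω ^ e.repr = (n : ℕ) := by
  rw [ONote.repr.eq_2, mul_add_div _ (opow_ne_zero _ omega0_ne_zero),
    div_eq_zero_of_lt h.snd'.repr_lt, add_zero]

theorem ONote.eq_one_and_eq_zero_of_repr_oadd_le {e a : ONote} {n : ℕ+}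
    (hle : (ONote.oadd e n a).repr ≤ ω ^ e.repr) : n = 1 ∧ a = 0 := by
  have hωn : ω ^ e.repr ≤ ω ^ e.repr * (n : ℕ) :=
    Ordinal.le_mul_left _ (by exact_mod_cast n.pos)
  have hn : (n : ℕ) ≤ 1 := by
    have : ω ^ e.repr * (n : ℕ) ≤ ω ^ e.repr * (1 : ℕ) := by simpa using le_self_add.trans hle
    exact_mod_cast (mul_le_mul_iff_right₀ (opow_pos _ omega0_pos)).1 this
  have ha : a.repr ≤ 0 := le_of_add_le_add_left (hle.trans (by simpa using hωn))
  refine ⟨PNat.coe_eq_one_iff.1 (le_antisymm hn n.pos), ?_⟩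
  cases a with
  | zero => rfl
  | oadd => exact absurd ha (lt_def.1 (oadd_pos _ _ _)).not_ge

theorem repr_predO : ∀ {e c : ONote}, predO e = some c → c.repr + 1 = e.repr
  | .zero, c, h => by simp [predO] at h
  | .oadd .zero n .zero, c, h => by
      simp only [predO, Option.some.injEq] at h
      subst h
      split_ifs with hn
      · simp [hn]
      · simp only [ONote.repr, opow_zero, one_mul, add_zero, PNat.mk_coe]
        exact_mod_cast Nat.sub_add_cancel n.pos
  | .oadd (.oadd _ _ _) _ .zero, c, h => by simp [predO] at h
  | .oadd e n (.oadd e₂ n₂ a₂), c, h => by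
      simp only [predO, Option.map_eq_some_iff] at h
      obtain ⟨c', hc', rfl⟩ := h
      simp only [ONote.repr, add_assoc, repr_predO hc']

theorem fundSeq_oadd_of_ne_zero (e : ONote) (n : ℕ+) {a : ONote} (ha : a ≠ 0) (x : ℕ) :
    fundSeq (oadd e n a) x = oadd e n (fundSeq a x) := by
  cases a with
  | zero => exact absurd rfl ha
  | oadd => cases e <;> rfl

theorem fundSeq_of_predO : ∀ {e c : ONote}, predO e = some c → ∀ x, fundSeq e x = c
  | .zero, c, h, _ => by simp [predO] at h
  | .oadd .zero n .zero, c, h, x => by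
      simp only [predO, Option.some.injEq] at h
      subst h; rfl
  | .oadd (.oadd _ _ _) _ .zero, c, h, _ => by simp [predO] at h
  | .oadd e n (.oadd e₂ n₂ a₂), c, h, x => by
      simp only [predO, Option.map_eq_some_iff] at h
      obtain ⟨c', hc', rfl⟩ := h
      rw [fundSeq_oadd_of_ne_zero _ _ (by simp) x, fundSeq_of_predO hc' x]

theorem fundSeq_oadd_zero_of_ne_one (e : ONote) {n : ℕ+} (hn : (n : ℕ) ≠ 1) (x : ℕ) :
    fundSeq (oadd e n 0) x =
      oadd e ⟨n - 1, by have := n.pos; omega⟩ (fundSeq (oadd e 1 0) x) := by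
  cases e <;> simp [fundSeq, hn]

theorem repr_fundSeq_omega_pow_of_predO {e c : ONote} (h : predO e = some c) (x : ℕ) :
    (fundSeq (oadd e 1 0) x).repr = ω ^ c.repr * x := by
  cases e with
  | zero => simp [predO] at h
  | oadd f m b =>
    by_cases hx : x = 0
    · simp [fundSeq, h, hx]
    · simp [fundSeq, h, hx, ONote.repr]

theorem fundSeq_omega_pow_of_predO_eq_none {e : ONote} (he : e ≠ 0) (h : predO e = none) (x : ℕ) :
    fundSeq (oadd e 1 0) x = oadd (fundSeq e x) 1 0 := by
  cases e with
  | zero => exact absurd rfl he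
  | oadd f m b => simp only [fundSeq, h]; rfl

theorem repr_fundSeq_omega_pow_one {e : ONote} (he : e ≠ 0) :
    (fundSeq (oadd e 1 0) 1).repr = ω ^ (fundSeq e 1).repr := by
  cases h : predO e with
  | some c => rw [repr_fundSeq_omega_pow_of_predO h, fundSeq_of_predO h]; simp
  | none => simp [fundSeq_omega_pow_of_predO_eq_none he h, ONote.repr]

theorem opow_mul_le_repr_fundSeq_one {e a : ONote} {n : ℕ+} (h : NF (oadd e n a)) {k : ℕ}
    (hk : ω ^ e.repr * k < (oadd e n a).repr) :
    ω ^ e.repr * k ≤ (fundSeq (oadd e n a) 1).repr := by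
  have hpos : 0 < ω ^ e.repr := opow_pos _ omega0_pos
  by_cases ha : a = 0
  · subst ha
    have hkn : k < (n : ℕ) := by
      simpa [ONote.repr, mul_lt_mul_iff_right₀ hpos] using hk
    rcases Nat.eq_zero_or_pos k with rfl | hk0
    · simp
    rw [fundSeq_oadd_zero_of_ne_one e (by omega) 1]
    calc ω ^ e.repr * k ≤ ω ^ e.repr * ((n - 1 : ℕ) : Ordinal) := by
          gcongr; exact_mod_cast (by omega : k ≤ n - 1)
      _ ≤ _ := le_self_add
  · have hkn : (k : Ordinal) ≤ (n : ℕ) := by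
      rw [← h.repr_div_opow, ← mul_le_iff_le_div hpos.ne']
      exact hk.le
    rw [fundSeq_oadd_of_ne_zero e n ha]
    calc ω ^ e.repr * k ≤ ω ^ e.repr * (n : ℕ) := by gcongr
      _ ≤ _ := le_self_add

def BachmannAt (α : ONote) (x : ℕ) : Prop :=
  ∀ β : ONote, β.NF → (fundSeq α x).repr < β.repr → β.repr < α.repr →
    (fundSeq α x).repr ≤ (fundSeq β 1).repr

/-- `oadd e p γ` need not be in normal form: with `γ = ω^e` it also covers `α = ω^e·(p+1)`. -/
theorem BachmannAt.of_eq_oadd {α e γ : ONote} {p : ℕ+} {x : ℕ} (hγ : γ.repr ≤ ω ^ e.repr)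
    (hγx : BachmannAt γ x) (hfs : fundSeq α x = oadd e p (fundSeq γ x))
    (hrepr : α.repr = (oadd e p γ).repr) : BachmannAt α x := by
  intro β hβ h1 h2
  rw [hfs] at h1 ⊢
  rw [hrepr] at h2
  obtain _ | ⟨e', m, b⟩ := β
  · exact (not_lt_zero h1).elim
  have hupper : (oadd e p γ).repr ≤ ω ^ e.repr * ((p : ℕ) + 1 : ℕ) := by
    rw [ONote.repr, Nat.cast_succ, mul_add_one]
    gcongr
  have hE : e'.repr = e.repr := by
    rw [← hβ.log_repr, log_eq_iff one_lt_omega0 (lt_def.1 (oadd_pos e' m b)).ne']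
    refine ⟨(omega0_le_oadd e p _).trans h1.le, h2.trans_le (hupper.trans ?_)⟩
    rw [opow_add, opow_one]
    exact mul_le_mul_right (natCast_lt_omega0 _).le _
  have hm : (m : ℕ) = p := by
    have hdiv := hβ.repr_div_opow
    rw [hE] at hdiv
    have hpos : ω ^ e.repr ≠ 0 := opow_ne_zero _ omega0_ne_zero
    have h_lo : ((p : ℕ) : Ordinal) ≤ (m : ℕ) := by
      rw [← hdiv, ← mul_le_iff_le_div hpos]
      exact le_self_add.trans h1.le
    have h_hi : ((m : ℕ) : Ordinal) < ((p : ℕ) + 1 : ℕ) := by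
      rw [← hdiv, ← lt_mul_iff_div_lt hpos]
      exact h2.trans_le hupper
    have := Nat.cast_le.1 h_lo
    have := Nat.cast_lt.1 h_hi
    omega
  have hβrepr : (oadd e' m b).repr = ω ^ e.repr * (p : ℕ) + b.repr := by
    rw [ONote.repr, hE, hm]
  rw [hβrepr] at h1 h2
  have hb1 : (fundSeq γ x).repr < b.repr := lt_of_add_lt_add_left h1
  have hb2 : b.repr < γ.repr := lt_of_add_lt_add_left h2
  have hb0 : b ≠ 0 := by
    rintro rfl
    exact not_lt_zero hb1
  rw [fundSeq_oadd_of_ne_zero _ _ hb0]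
  simp only [ONote.repr, hE, hm]
  exact add_le_add_right (hγx b hβ.snd hb1 hb2) _

theorem BachmannAt.omega_pow {e : ONote} {x : ℕ} (he : BachmannAt e x) :
    BachmannAt (oadd e 1 0) x := by
  intro β hβ h1 h2
  obtain _ | ⟨e', m, b⟩ := β
  · exact (not_lt_zero h1).elim
  have hβ0 : (oadd e' m b).repr ≠ 0 := (lt_def.1 (oadd_pos e' m b)).ne'
  have hlt : e'.repr < e.repr := by
    rw [← hβ.log_repr, ← lt_opow_iff_log_lt one_lt_omega0 hβ0]
    simpa [ONote.repr] using h2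
  cases hp : predO e with
  | some c =>
    rw [repr_fundSeq_omega_pow_of_predO hp] at h1 ⊢
    rcases Nat.eq_zero_or_pos x with rfl | hx
    · simp
    have hc : e'.repr = c.repr := by
      rw [← hβ.log_repr, log_eq_iff one_lt_omega0 hβ0, repr_predO hp]
      exact ⟨(Ordinal.le_mul_left _ (by exact_mod_cast hx)).trans h1.le,
        by simpa [ONote.repr] using h2⟩
    rw [← hc] at h1 ⊢
    exact opow_mul_le_repr_fundSeq_one hβ h1
  | none =>
    have he0 : e ≠ 0 := by
      rintro rfl
      exact not_lt_zero hlt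
    rw [fundSeq_omega_pow_of_predO_eq_none he0 hp] at h1 ⊢
    simp only [ONote.repr, PNat.one_coe, Nat.cast_one, mul_one, add_zero] at h1 ⊢
    by_cases hβω : ω ^ e'.repr < (oadd e' m b).repr
    · have hle : (fundSeq e x).repr ≤ e'.repr := by
        rw [← hβ.log_repr, ← opow_le_iff_le_log one_lt_omega0 hβ0]
        exact h1.le
      calc ω ^ (fundSeq e x).repr ≤ ω ^ e'.repr * (1 : ℕ) := by
            simpa using opow_le_opow_right omega0_pos hle
        _ ≤ _ := opow_mul_le_repr_fundSeq_one hβ (by simpa using hβω)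
    · obtain ⟨rfl, rfl⟩ := eq_one_and_eq_zero_of_repr_oadd_le (not_lt.1 hβω)
      simp only [ONote.repr, PNat.one_coe, Nat.cast_one, mul_one, add_zero] at h1
      have hxe' : (fundSeq e x).repr < e'.repr := (opow_lt_opow_iff_right one_lt_omega0).1 h1
      have he'0 : e' ≠ 0 := by
        rintro rfl
        exact not_lt_zero hxe'
      rw [repr_fundSeq_omega_pow_one he'0]
      exact opow_le_opow_right omega0_pos (he e' hβ.fst hxe' hlt)

theorem bachmannAt {x : ℕ} : ∀ {α : ONote}, α.NF → BachmannAt α x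
  | .zero, _ => fun _ _ _ h2 => (not_lt_zero h2).elim
  | .oadd e n a, hα => by
    by_cases ha : a = 0
    · subst ha
      by_cases hn : (n : ℕ) = 1
      · obtain rfl : n = 1 := PNat.coe_eq_one_iff.1 hn
        exact (bachmannAt hα.fst).omega_pow
      · refine (bachmannAt hα.fst).omega_pow.of_eq_oadd (by simp [ONote.repr])
          (fundSeq_oadd_zero_of_ne_one e hn x) ?_
        simp only [ONote.repr, PNat.mk_coe, PNat.one_coe, Nat.cast_one, mul_one, add_zero,
          ← mul_add_one, ← Nat.cast_succ, Nat.succ_eq_add_one, Nat.sub_add_cancel n.pos]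
    · exact (bachmannAt hα.snd).of_eq_oadd hα.snd'.repr_lt.le
        (fundSeq_oadd_of_ne_zero e n ha x) rfl

/-- The Bachmann property of the standard fundamental sequences below `ε₀`:
if `α[x] < β < α` then `α[x] ≤ β[1]`. -/
theorem bachmann_property (α β : ONote) (hα : α.NF) (hβ : β.NF) (x : ℕ)
    (h1 : (fundSeq α x).repr < β.repr) (h2 : β.repr < α.repr) :
    (fundSeq α x).repr ≤ (fundSeq β 1).repr :=
  bachmannAt hα β hβ h1 h2
end

section
/- If α < β are ordinals below ε₀, then either β = α+1, or α < β[1], or there exist a Cantor-normal-form context λ[[·]] (an ordinal expression with one placeholder), an ordinal γ, and a natural number r such that α = λ[[ω^γ·r]] and β = λ*[[ω^{γ+1}]], where λ* is the truncation of λ (hereditarily deleting all terms after the placeholder); moreover in this case α < λ*[[ω^γ·(r+1)]]. -/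
/-- An ordinal context with exactly one placeholder: either the placeholder is a
summand (with the summands before and after it), or it occurs inside the
exponent of a summand. -/
inductive Ctx : Type 1
  | atHole (pre post : Ordinal)
  | inExp (pre : Ordinal) (c : Ctx) (post : Ordinal)

/-- Substitution of an ordinal into the placeholder of a context. -/
noncomputable def Ctx.subst : Ctx → Ordinal → Ordinal
  | .atHole p q, x => p + x + q
  | .inExp p c q, x => p + Ordinal.omega0 ^ (Ctx.subst c x) + q

/-- The truncation `λ*` of a context `λ`: hereditarily delete all summands
occurring after the placeholder. -/
def Ctx.trunc : Ctx → Ctx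
  | .atHole p _ => .atHole p 0
  | .inExp p c _ => .inExp p c.trunc 0

/-!
Induction on the Cantor normal form of `β`. Peeling off its summands one at a time reduces to
`β = p + ω ^ E` with `p ≤ α` (if `α < p`, then already `α < β[1]`), and contexts are stable under
adding `p` on the left, so one may take `p = 0`. If `E = γ + 1`, then `α` lies in a block
`[ω ^ γ * r, ω ^ γ * (r + 1))` and the placeholder is a summand. If `E` is a limit, the leading
exponent `f` of `α` is below `E`, and the induction hypothesis for `f < E` yields either `f < E[1]`
or a context for `f`, which is then placed inside the exponent of the leading term of `α`; its
remaining alternative `E = f + 1` cannot occur since `E` is a limit.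
-/

open Ordinal Order

theorem Ordinal.exists_nat_mul_le_lt_mul_add_one {a δ : Ordinal} (ha : a ≠ 0) (hδ : δ < a * ω) :
    ∃ r : ℕ, a * r ≤ δ ∧ δ < a * (r + 1) := by
  obtain ⟨r, hr⟩ := lt_omega0.1 ((lt_mul_iff_div_lt ha).1 hδ)
  refine ⟨r, hr ▸ mul_div_le δ a, ?_⟩
  rw [← hr, ← succ_eq_add_one]
  exact lt_mul_succ_div δ ha

def Ctx.prepend (p : Ordinal) : Ctx → Ctx
  | .atHole q s => .atHole (p + q) s
  | .inExp q c s => .inExp (p + q) c s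

@[simp]
theorem Ctx.subst_prepend (p : Ordinal) (c : Ctx) (x : Ordinal) :
    (c.prepend p).subst x = p + c.subst x := by
  cases c <;> simp [Ctx.prepend, Ctx.subst, add_assoc]

@[simp]
theorem Ctx.trunc_prepend (p : Ordinal) (c : Ctx) : (c.prepend p).trunc = c.trunc.prepend p := by
  cases c <;> rfl

/-- `β₁` stands for `β[1]`; keeping it abstract lets the three alternatives be shifted by a common
left summand (`ContextTrichotomy.add_left`). -/
def ContextTrichotomy (α β β₁ : Ordinal) : Prop :=
  β = α + 1 ∨ α < β₁ ∨
    ∃ (c : Ctx) (γ : Ordinal) (r : ℕ),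
      α = c.subst (ω ^ γ * r) ∧
      β = c.trunc.subst (ω ^ (γ + 1)) ∧
      α < c.trunc.subst (ω ^ γ * (r + 1))

namespace ContextTrichotomy

theorem add_left {α β β₁ : Ordinal} (h : ContextTrichotomy α β β₁) (p : Ordinal) :
    ContextTrichotomy (p + α) (p + β) (p + β₁) := by
  rcases h with h | h | ⟨c, γ, r, h₁, h₂, h₃⟩
  · exact .inl (by rw [h, add_assoc])
  · exact .inr (.inl ((add_lt_add_iff_left p).2 h))
  · refine .inr (.inr ⟨c.prepend p, γ, r, ?_, ?_, ?_⟩)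
    · rw [Ctx.subst_prepend, h₁]
    · rw [Ctx.trunc_prepend, Ctx.subst_prepend, h₂]
    · rw [Ctx.trunc_prepend, Ctx.subst_prepend]
      exact (add_lt_add_iff_left p).2 h₃

theorem add {α p β β₁ : Ordinal} (h : p ≤ α → ContextTrichotomy (α - p) β β₁) :
    ContextTrichotomy α (p + β) (p + β₁) := by
  rcases lt_or_ge α p with hα | hα
  · exact .inr (.inl (hα.trans_le le_self_add))
  · simpa [Ordinal.add_sub_cancel_of_le hα] using (h hα).add_left p

theorem opow_succ {δ γ : Ordinal} (hδ : δ < ω ^ (γ + 1)) :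
    ContextTrichotomy δ (ω ^ (γ + 1)) (ω ^ γ) := by
  rw [← succ_eq_add_one, Ordinal.opow_succ] at hδ
  obtain ⟨r, hr₁, hr₂⟩ :=
    Ordinal.exists_nat_mul_le_lt_mul_add_one (opow_pos γ omega0_pos).ne' hδ
  refine .inr (.inr ⟨.atHole 0 (δ - ω ^ γ * r), γ, r, ?_, ?_, ?_⟩) <;>
    simp [Ctx.subst, Ctx.trunc, Ordinal.add_sub_cancel_of_le hr₁, hr₂]

theorem opow_of_isSuccLimit {f E E₁ δ : Ordinal} (hE : IsSuccLimit E)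
    (h : ContextTrichotomy f E E₁) (hδ₁ : ω ^ f ≤ δ) (hδ₂ : δ < ω ^ (f + 1)) :
    ContextTrichotomy δ (ω ^ E) (ω ^ E₁) := by
  have lt_opow {X : Ordinal} (hX : f < X) : δ < ω ^ X :=
    hδ₂.trans_le (opow_le_opow_right omega0_pos (add_one_le_of_lt hX))
  rcases h with h | h | ⟨c, γ, r, h₁, h₂, h₃⟩
  · exact absurd (h ▸ hE) (succ_eq_add_one f ▸ not_isSuccLimit_succ f)
  · exact .inr (.inl (lt_opow h))
  · refine .inr (.inr ⟨.inExp 0 c (δ - ω ^ f), γ, r, ?_, ?_, ?_⟩)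
    · simp [Ctx.subst, ← h₁, Ordinal.add_sub_cancel_of_le hδ₁]
    · simp only [Ctx.subst, Ctx.trunc, ← h₂, zero_add, add_zero]
    · simpa [Ctx.subst, Ctx.trunc] using lt_opow h₃

end ContextTrichotomy

theorem repr_eq_add_one_of_predO_eq_some :
    ∀ {e e' : ONote}, predO e = some e' → e.repr = e'.repr + 1
  | .zero, _, h => by simp [predO] at h
  | .oadd .zero n .zero, e', h => by
    simp only [predO, Option.some.injEq] at h
    subst h
    split_ifs with hn
    · simp [hn]
    · obtain ⟨k, hk⟩ : ∃ k, (n : ℕ) = k + 1 := ⟨_, (Nat.succ_pred_eq_of_pos n.pos).symm⟩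
      simp [hk, ONote.repr]
  | .oadd (.oadd _ _ _) _ .zero, _, h => by simp [predO] at h
  | .oadd e n (.oadd e₁ n₁ a₁), e', h => by
    simp only [predO, Option.map_eq_some_iff] at h
    obtain ⟨a', ha', rfl⟩ := h
    simp [repr_eq_add_one_of_predO_eq_some ha', add_assoc]

theorem isSuccLimit_repr_of_predO_eq_none :
    ∀ {e : ONote}, e ≠ 0 → predO e = none → IsSuccLimit e.repr
  | .zero, he, _ => absurd rfl he
  | .oadd .zero _ .zero, _, h => by simp [predO] at h
  | .oadd (.oadd f m b) n .zero, _, _ => by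
    simpa using isSuccLimit_mul_left
      (isSuccLimit_opow_left isSuccLimit_omega0 (ONote.lt_def.1 (ONote.oadd_pos f m b)).ne')
      (by exact_mod_cast n.pos)
  | .oadd e n (.oadd e₁ n₁ a₁), _, h => by
    simp only [predO, Option.map_eq_none_iff] at h
    exact isSuccLimit_add _ (isSuccLimit_repr_of_predO_eq_none (ONote.oadd_pos _ _ _).ne' h)

theorem repr_oadd_zero_eq_add (E : ONote) (n : ℕ+) :
    (ONote.oadd E n .zero).repr = ω ^ E.repr * ((n : ℕ) - 1 : ℕ) + ω ^ E.repr := by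
  obtain ⟨k, hk⟩ : ∃ k, (n : ℕ) = k + 1 := ⟨_, (Nat.succ_pred_eq_of_pos n.pos).symm⟩
  simp [hk, mul_add]

theorem repr_fundSeq_oadd_zero (E : ONote) (n : ℕ+) :
    (fundSeq (.oadd E n .zero) 1).repr =
      ω ^ E.repr * ((n : ℕ) - 1 : ℕ) + (fundSeq (.oadd E 1 .zero) 1).repr := by
  by_cases hn : (n : ℕ) = 1 <;> cases E <;> simp [fundSeq, hn, ONote.repr]

theorem ONote.exists_NF_repr_eq_sub (a E : ONote) [a.NF] [E.NF] (k : ℕ) :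
    ∃ d : ONote, d.NF ∧ d.repr = a.repr - ω ^ E.repr * k :=
  ⟨a - .oadd E 1 0 * .ofNat k, inferInstance, by simp [ONote.repr_sub, ONote.repr_mul]⟩

theorem contextTrichotomy_omega0_opow (E : ONote)
    (ih : ∀ f : ONote, f.NF → f.repr < E.repr →
      ContextTrichotomy f.repr E.repr (fundSeq E 1).repr)
    (d : ONote) (hd : d.NF) (hdE : d.repr < ω ^ E.repr) :
    ContextTrichotomy d.repr (ω ^ E.repr) (fundSeq (.oadd E 1 .zero) 1).repr := by
  rcases E with _ | ⟨f, m, b⟩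
  · have hd₀ : d.repr = 0 := by simpa using hdE
    exact .inl (by simp [hd₀])
  cases hpred : predO (.oadd f m b) with
  | some e' =>
    have hfund : fundSeq (.oadd (.oadd f m b) 1 .zero) 1 = .oadd e' 1 .zero := by
      simp [fundSeq, hpred]
    rw [hfund, repr_eq_add_one_of_predO_eq_some hpred]
    rw [repr_eq_add_one_of_predO_eq_some hpred] at hdE
    simpa using ContextTrichotomy.opow_succ hdE
  | none =>
    have hfund : fundSeq (.oadd (.oadd f m b) 1 .zero) 1 =
        .oadd (fundSeq (.oadd f m b) 1) 1 .zero := by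
      simp [fundSeq, hpred]
    rw [hfund]
    rcases d with _ | ⟨f', m', b'⟩
    · exact .inr (.inl (by simpa using opow_pos _ omega0_pos))
    have hf' : f'.repr < (ONote.oadd f m b).repr :=
      (opow_lt_opow_iff_right one_lt_omega0).1 ((ONote.omega0_le_oadd f' m' b').trans_lt hdE)
    simpa using ContextTrichotomy.opow_of_isSuccLimit
      (isSuccLimit_repr_of_predO_eq_none (by rintro ⟨⟩) hpred)
      (ih f' hd.fst hf') (ONote.omega0_le_oadd f' m' b')
      (ONote.NF.below_of_lt (lt_add_one _) hd).repr_lt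

/-- If `α < β` (below `ε₀`), then either `β = α + 1`, or `α < β[1]`, or there
are a context `λ`, an ordinal `γ` and a natural number `r` with
`α = λ[[ω^γ·r]]` and `β = λ*[[ω^{γ+1}]]`; moreover then `α < λ*[[ω^γ·(r+1)]]`. -/
theorem context_trichotomy (a b : ONote) (ha : a.NF) (hb : b.NF)
    (hab : a.repr < b.repr) :
    b.repr = a.repr + 1 ∨ a.repr < (fundSeq b 1).repr ∨
    ∃ (c : Ctx) (γ : Ordinal) (r : ℕ),
      a.repr = c.subst (Ordinal.omega0 ^ γ * r) ∧
      b.repr = c.trunc.subst (Ordinal.omega0 ^ (γ + 1)) ∧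
      a.repr < c.trunc.subst (Ordinal.omega0 ^ γ * (r + 1)) := by
  change ContextTrichotomy a.repr b.repr (fundSeq b 1).repr
  induction b generalizing a with
  | zero => simp at hab
  | oadd e n t ihe iht =>
    have he : e.NF := hb.fst
    cases t with
    | zero =>
      rw [repr_oadd_zero_eq_add] at hab ⊢
      rw [repr_fundSeq_oadd_zero]
      refine ContextTrichotomy.add fun hle => ?_
      obtain ⟨d, hd, hdr⟩ := ONote.exists_NF_repr_eq_sub a e ((n : ℕ) - 1)
      rw [← hdr]
      refine contextTrichotomy_omega0_opow e (fun f hf hfe => ihe f hf he hfe) d hd ?_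
      rwa [hdr, sub_lt_of_le hle]
    | oadd e₁ n₁ t₁ =>
      change ContextTrichotomy a.repr (ω ^ e.repr * (n : ℕ) + (ONote.oadd e₁ n₁ t₁).repr)
        (ω ^ e.repr * (n : ℕ) + (fundSeq (.oadd e₁ n₁ t₁) 1).repr)
      refine ContextTrichotomy.add fun hle => ?_
      obtain ⟨d, hd, hdr⟩ := ONote.exists_NF_repr_eq_sub a e n
      rw [← hdr]
      exact iht d hd hb.snd (by rwa [hdr, sub_lt_of_le hle])
end
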